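/- arXiv:1509.04835 — 3 statements merged into one kernel-verified Lean document; each statement's English description precedes it below -/
import Mathlib

section
/- Suppose for each prime p we are given an integer a_p with |a_p| ≤ 2√p, and set C_p = p - a_p. Then the Euler product ∏_p (1 - a_p·p^{-s}/(p² - C_p)), taken over primes p with p² ≠ C_p, converges absolutely for every complex s with Re(s) > -1/2. Consequently, the global Igusa zeta function of a nonsingular plane curve, written as ζ(s+1)·∏_p (1 - a_p p^{-s}/(p²-C_p)), has a meromorphic continuation to the region Re(s) > -1/2. -/
/-!
The correction term `a_p p^{-s} / (p² - C_p)` has modulus at most `2√p · p^{-Re s} / (p²/9)`: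
the denominator `p² - p + a_p` is a nonzero integer, so it is at least `1 ≥ p²/9` in absolute
value for `p ≤ 3`, and at least `p² - p - 2√p ≥ p²/9` for `p ≥ 4`. Hence the terms are
`O(p^{-3/2-σ})` uniformly on `Re s ≥ σ`, which is summable for `σ > -1/2`. Locally uniform
convergence of the Euler product then makes it holomorphic on `Re s > -1/2`. Finally `ζ` is
meromorphic on `ℂ`, being `(Λ₀(s) - 1/s - 1/(1-s)) / Γℝ(s)` with `Λ₀` and `1/Γℝ` entire.
-/

open Complex Filter Topology

lemma meromorphicAt_riemannZeta_one : MeromorphicAt riemannZeta 1 := by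
  have hformula : (fun s => (completedRiemannZeta₀ s - 1 / s - 1 / (1 - s)) * (Gammaℝ s)⁻¹)
      =ᶠ[𝓝[≠] 1] riemannZeta := by
    filter_upwards [nhdsWithin_le_nhds (isOpen_compl_singleton.mem_nhds one_ne_zero)] with s hs
    rw [riemannZeta_def_of_ne_zero hs, completedRiemannZeta_eq, ← div_eq_mul_inv]
  have hΛ₀ := (differentiable_completedZeta₀.analyticAt 1).meromorphicAt
  have hΓ := (differentiable_Gammaℝ_inv.analyticAt 1).meromorphicAt
  exact MeromorphicAt.congr (by fun_prop) hformula

lemma meromorphic_riemannZeta : Meromorphic riemannZeta := by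
  intro z
  rcases eq_or_ne z 1 with rfl | hz
  · exact meromorphicAt_riemannZeta_one
  · exact (differentiableOn_riemannZeta.analyticAt
      (isOpen_compl_singleton.mem_nhds hz)).meromorphicAt

lemma differentiableOn_tprod_one_add_of_summable_norm {ι : Type*} {f : ι → ℂ → ℂ} {u : ι → ℝ}
    {U : Set ℂ} (hu : Summable u) (hf : ∀ i, DifferentiableOn ℂ (f i) U) (hU : IsOpen U)
    (hfu : ∀ i, ∀ w ∈ U, ‖f i w‖ ≤ u i) :
    DifferentiableOn ℂ (fun w => ∏' i, (1 + f i w)) U :=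
  (hu.hasProdLocallyUniformlyOn_one_add hU (.of_forall hfu) fun i => (hf i).continuousOn)
    |>.differentiableOn (.of_forall fun _ =>
      DifferentiableOn.fun_finsetProd fun i _ => (hf i).const_add 1) hU

noncomputable def eulerTerm (c : ℤ) (p : ℕ) (s : ℂ) : ℂ :=
  c * (p : ℂ) ^ (-s) / ((p : ℂ) ^ 2 - ((p - c : ℤ) : ℂ))

lemma differentiable_eulerTerm (c : ℤ) {p : ℕ} (hp : p ≠ 0) :
    Differentiable ℂ (eulerTerm c p) :=
  ((differentiable_const _).mul
    (differentiable_neg.const_cpow (.inl (Nat.cast_ne_zero.2 hp)))).div_const _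

lemma sq_div_nine_le_abs_sq_sub {p : ℕ} {c : ℤ} (hc : |(c : ℝ)| ≤ 2 * √p)
    (hne : (p : ℤ) ^ 2 ≠ p - c) : (p : ℝ) ^ 2 / 9 ≤ |(p : ℝ) ^ 2 - ((p - c : ℤ) : ℝ)| := by
  rcases le_or_gt p 3 with hp | hp
  · have hone : (1 : ℝ) ≤ |(p : ℝ) ^ 2 - ((p - c : ℤ) : ℝ)| := by
      exact_mod_cast Int.one_le_abs (sub_ne_zero.2 hne)
    have : (p : ℝ) ≤ 3 := by exact_mod_cast hp
    nlinarith [Nat.cast_nonneg (α := ℝ) p]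
  · have hp4 : (4 : ℝ) ≤ p := by exact_mod_cast hp
    have hsqrt : 2 ≤ √(p : ℝ) := Real.le_sqrt_of_sq_le (by linarith)
    have hsq := Real.sq_sqrt (Nat.cast_nonneg (α := ℝ) p)
    refine le_trans ?_ (le_abs_self _)
    push_cast
    nlinarith [(abs_le.1 hc).1]

lemma norm_eulerTerm_le {p : ℕ} (hp : 1 ≤ p) {c : ℤ} (hc : |(c : ℝ)| ≤ 2 * √p)
    (hne : (p : ℤ) ^ 2 ≠ p - c) {σ : ℝ} {s : ℂ} (hs : σ ≤ s.re) :
    ‖eulerTerm c p s‖ ≤ 18 * (p : ℝ) ^ (-(3 / 2 + σ)) := by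
  have hp₀ : (0 : ℝ) < p := by exact_mod_cast hp
  have hnorm : ‖eulerTerm c p s‖ =
      |(c : ℝ)| * (p : ℝ) ^ (-s.re) / |(p : ℝ) ^ 2 - ((p - c : ℤ) : ℝ)| := by
    rw [eulerTerm, norm_div, norm_mul, norm_natCast_cpow_of_pos hp, neg_re]
    norm_cast
  calc ‖eulerTerm c p s‖
      ≤ 2 * √p * (p : ℝ) ^ (-σ) / ((p : ℝ) ^ 2 / 9) := by
        rw [hnorm]
        gcongr
        · exact_mod_cast hp
        · exact sq_div_nine_le_abs_sq_sub hc hne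
    _ = 18 * (p : ℝ) ^ (-(3 / 2 + σ)) := by
        rw [Real.sqrt_eq_rpow, ← Real.rpow_natCast, show -(3 / 2 + σ) = 1 / 2 + -σ - (2 : ℕ) by
          push_cast; ring, Real.rpow_sub hp₀, Real.rpow_add hp₀]
        ring

abbrev IgusaPrimes (a : ℕ → ℤ) : Type := {p : ℕ // p.Prime ∧ ((p : ℤ) ^ 2 ≠ (p : ℤ) - a p)}

lemma summable_eulerTerm_majorant (a : ℕ → ℤ) {σ : ℝ} (hσ : -(1 / 2 : ℝ) < σ) :
    Summable fun p : IgusaPrimes a => 18 * (p : ℝ) ^ (-(3 / 2 + σ)) :=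
  ((Real.summable_nat_rpow.2 (by linarith)).mul_left 18).subtype _

lemma norm_eulerTerm_le_of_igusaPrimes {a : ℕ → ℤ}
    (ha : ∀ p : ℕ, p.Prime → |(a p : ℝ)| ≤ 2 * √p) (p : IgusaPrimes a) {σ : ℝ} {s : ℂ}
    (hs : σ ≤ s.re) :
    ‖eulerTerm (a p) p s‖ ≤ 18 * (p : ℝ) ^ (-(3 / 2 + σ)) :=
  norm_eulerTerm_le p.2.1.one_le (ha p p.2.1) p.2.2 hs

lemma differentiableOn_igusaEulerProduct {a : ℕ → ℤ}
    (ha : ∀ p : ℕ, p.Prime → |(a p : ℝ)| ≤ 2 * √p) :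
    DifferentiableOn ℂ (fun s => ∏' p : IgusaPrimes a, (1 - eulerTerm (a p) p s))
      {s | -(1 / 2 : ℝ) < s.re} := by
  intro s₀ (hs₀ : -(1 / 2 : ℝ) < s₀.re)
  obtain ⟨σ, hσ, hσs₀⟩ := exists_between hs₀
  have hopen : IsOpen {s : ℂ | σ < s.re} := isOpen_lt continuous_const continuous_re
  have hdiff : DifferentiableOn ℂ (fun s => ∏' p : IgusaPrimes a, (1 + -eulerTerm (a p) p s))
      {s | σ < s.re} :=
    differentiableOn_tprod_one_add_of_summable_norm (summable_eulerTerm_majorant a hσ)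
      (fun p => (differentiable_eulerTerm _ p.2.1.ne_zero).neg.differentiableOn) hopen
      fun p s hs => (norm_neg _).trans_le (norm_eulerTerm_le_of_igusaPrimes ha p hs.le)
  simp only [← sub_eq_add_neg] at hdiff
  exact ((hdiff s₀ hσs₀).differentiableAt (hopen.mem_nhds hσs₀)).differentiableWithinAt

/-- Given integers `a_p` with `|a_p| ≤ 2√p` and `C_p = p - a_p`, the Euler product
`∏_p (1 - a_p p^{-s}/(p² - C_p))` (over primes with `p² ≠ C_p`) converges absolutely for
`Re s > -1/2`; consequently the global Igusa zeta function, written as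
`ζ(s+1)·∏_p (1 - a_p p^{-s}/(p²-C_p))`, is meromorphic on `Re s > -1/2`. -/
theorem igusa_first_meromorphic_continuation
    (a : ℕ → ℤ) (ha : ∀ p : ℕ, p.Prime → |(a p : ℝ)| ≤ 2 * Real.sqrt p) :
    (∀ s : ℂ, -(1/2 : ℝ) < s.re →
      Summable (fun p : {p : ℕ // p.Prime ∧ ((p : ℤ) ^ 2 ≠ (p : ℤ) - a p)} =>
        ‖(a (p : ℕ) : ℂ) * ((p : ℕ) : ℂ) ^ (-s) /
            (((p : ℕ) : ℂ) ^ 2 - (((p : ℕ) : ℤ) - a (p : ℕ) : ℤ))‖)) ∧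
    MeromorphicOn
      (fun s : ℂ => riemannZeta (s + 1) *
        ∏' p : {p : ℕ // p.Prime ∧ ((p : ℤ) ^ 2 ≠ (p : ℤ) - a p)},
          (1 - (a (p : ℕ) : ℂ) * ((p : ℕ) : ℂ) ^ (-s) /
            (((p : ℕ) : ℂ) ^ 2 - (((p : ℕ) : ℤ) - a (p : ℕ) : ℤ))))
      {s : ℂ | -(1/2 : ℝ) < s.re} := by
  have hzeta : Meromorphic fun s : ℂ => riemannZeta (s + 1) :=
    Meromorphic.meromorphic_fun_comp_add_const_iff_meromorphic.2 meromorphic_riemannZeta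
  refine ⟨fun s hs => ?_, ?_⟩
  · exact .of_nonneg_of_le (fun _ => norm_nonneg _)
      (fun p => norm_eulerTerm_le_of_igusaPrimes ha p le_rfl) (summable_eulerTerm_majorant a hs)
  · exact hzeta.meromorphicOn.mul ((differentiableOn_igusaEulerProduct ha).analyticOnNhd
      (isOpen_lt continuous_const continuous_re)).meromorphicOn
end

section
/- Let p ≥ 5 be a prime and let a be a real number with √p < a ≤ 2√p. Set C = p - a. Then the equation 1 - a·p^{-s}/(p² - C) = 0 has a real solution s₀, namely s₀ = -3/2 + log(r)/log(p) where b = a·p^{-1/2} and r = b/(1 - p^{-1} + b·p^{-3/2}), and this solution satisfies -3/2 < s₀ < -3/2 + log(3)/log(p). In particular s₀ → -3/2 as p → ∞ along primes with √p < a_p ≤ 2√p. -/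
/-!
Writing `b = a p^{-1/2}` and `p^{-1/2} = p^{3/2} p^{-2}`, the quantity `r` simplifies to
`a p^{3/2} / (p² - p + a) = a p^{3/2} / (p² - C)`. Since `p^{-s₀} = p^{3/2} / r`, the numerator
`a p^{-s₀}` is exactly `p² - C`, so the local factor vanishes. The bounds on `s₀` amount to
`1 < r < 3`: from `√p < a` we get `a p^{3/2} > p² > p² - p + a` (as `a ≤ 2√p < p`), and from
`a ≤ 2√p` we get `a p^{3/2} ≤ 2p² < 3(p² - p + a)`.
-/

open Real

namespace LocalZero

variable {x a : ℝ}

noncomputable def localRatio (x a : ℝ) : ℝ := a * x ^ ((3 : ℝ) / 2) / (x ^ 2 - x + a)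

lemma rpow_three_halves (hx : 0 < x) : x ^ ((3 : ℝ) / 2) = x * √x := by
  rw [show (3 : ℝ) / 2 = 1 + 1 / 2 by norm_num, rpow_add hx, rpow_one, sqrt_eq_rpow]

lemma rpow_sub_log_div_log {r : ℝ} (hx : 0 < x) (hx1 : x ≠ 1) (hr : 0 < r) (c : ℝ) :
    x ^ (c - log r / log x) = x ^ c / r := by
  rw [rpow_sub hx, log_div_log, rpow_logb hx hx1 hr]

lemma div_one_sub_inv_add_eq_localRatio (hx : 0 < x) (a : ℝ) :
    a * x ^ (-(1 : ℝ) / 2) / (1 - x⁻¹ + a * x ^ (-(1 : ℝ) / 2) * x ^ (-(3 : ℝ) / 2)) =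
      localRatio x a := by
  have hhalf : x ^ (-(1 : ℝ) / 2) = x ^ ((3 : ℝ) / 2) / x ^ 2 := by
    rw [← rpow_natCast, ← rpow_sub hx]; norm_num
  have hprod : x ^ (-(1 : ℝ) / 2) * x ^ (-(3 : ℝ) / 2) = 1 / x ^ 2 := by
    rw [← rpow_add hx, ← rpow_natCast, one_div, ← rpow_neg hx.le]; norm_num
  have hx0 : x ≠ 0 := hx.ne'
  rw [localRatio, mul_assoc a, hprod, hhalf]
  field_simp

lemma one_lt_localRatio (hx : 4 < x) (ha1 : √x < a) (ha2 : a ≤ 2 * √x) :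
    1 < localRatio x a := by
  have hx0 : 0 < x := by linarith
  have hs := mul_self_sqrt hx0.le
  have hs2 : 2 < √x := by nlinarith [sqrt_nonneg x]
  rw [localRatio, rpow_three_halves hx0, one_lt_div (by nlinarith)]
  nlinarith [mul_lt_mul_of_pos_right ha1 (mul_pos hx0 (sqrt_pos.2 hx0))]

lemma localRatio_lt_three (hx : 3 ≤ x) (ha0 : 0 < a) (ha2 : a ≤ 2 * √x) :
    localRatio x a < 3 := by
  have hx0 : 0 < x := by linarith
  have hs := mul_self_sqrt hx0.le
  rw [localRatio, rpow_three_halves hx0, div_lt_iff₀ (by nlinarith)]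
  nlinarith [mul_le_mul_of_nonneg_right ha2 (mul_pos hx0 (sqrt_pos.2 hx0)).le]

lemma mul_rpow_neg_eq_of_localRatio {s : ℝ} (hx : 1 < x) (ha0 : 0 < a)
    (hs : s = -(3 / 2) + log (localRatio x a) / log x) :
    a * x ^ (-s) = x ^ 2 - (x - a) := by
  have hx0 : 0 < x := by linarith
  have hD : 0 < x ^ 2 - x + a := by nlinarith
  have hr : 0 < localRatio x a := by unfold localRatio; positivity
  rw [show -s = 3 / 2 - log (localRatio x a) / log x by rw [hs]; ring,
    rpow_sub_log_div_log hx0 hx.ne' hr, localRatio]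
  have hpow : x ^ ((3 : ℝ) / 2) ≠ 0 := by positivity
  field_simp
  ring

end LocalZero

open LocalZero in
theorem local_zero_near_boundary_general
    (p : ℕ) (hp5 : 5 ≤ p) (a : ℝ)
    (ha1 : Real.sqrt p < a) (ha2 : a ≤ 2 * Real.sqrt p)
    (C b r s₀ : ℝ)
    (hC : C = (p : ℝ) - a)
    (hb : b = a * (p : ℝ) ^ (-(1 : ℝ) / 2))
    (hr : r = b / (1 - (p : ℝ)⁻¹ + b * (p : ℝ) ^ (-(3 : ℝ) / 2)))
    (hs : s₀ = -(3 / 2) + Real.log r / Real.log p) :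
    1 - a * (p : ℝ) ^ (-s₀) / ((p : ℝ) ^ 2 - C) = 0 ∧
    -(3 / 2) < s₀ ∧ s₀ < -(3 / 2) + Real.log 3 / Real.log p := by
  have hp : (5 : ℝ) ≤ p := by exact_mod_cast hp5
  have ha0 : 0 < a := (Real.sqrt_nonneg _).trans_lt ha1
  have hr_eq : r = localRatio p a := by
    rw [hr, hb, div_one_sub_inv_add_eq_localRatio (by linarith)]
  have hr1 : 1 < r := hr_eq ▸ one_lt_localRatio (by linarith) ha1 ha2
  have hr3 : r < 3 := hr_eq ▸ localRatio_lt_three (by linarith) ha0 ha2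
  have hlog : 0 < Real.log p := Real.log_pos (by linarith)
  refine ⟨?_, ?_, ?_⟩
  · have hD : (p : ℝ) ^ 2 - C ≠ 0 := by rw [hC]; nlinarith
    rw [mul_rpow_neg_eq_of_localRatio (by linarith) ha0 (hr_eq ▸ hs), ← hC, div_self hD,
      sub_self]
  · rw [hs]
    linarith [div_pos (Real.log_pos hr1) hlog]
  · rw [hs]
    gcongr

/-- Local zeros approaching the candidate natural boundary: for a prime `p ≥ 5` and
`√p < a ≤ 2√p`, with `C = p - a`, `b = a·p^{-1/2}`, `r = b/(1-p⁻¹+b·p^{-3/2})` and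
`s₀ = -3/2 + log r / log p`, one has `1 - a·p^{-s₀}/(p²-C) = 0` and
`-3/2 < s₀ < -3/2 + log 3 / log p` (so `s₀ → -3/2` as `p → ∞`). -/
theorem local_zero_near_boundary
    (p : ℕ) (hp : p.Prime) (hp5 : 5 ≤ p) (a : ℝ)
    (ha1 : Real.sqrt p < a) (ha2 : a ≤ 2 * Real.sqrt p)
    (C b r s₀ : ℝ)
    (hC : C = (p : ℝ) - a)
    (hb : b = a * (p : ℝ) ^ (-(1 : ℝ) / 2))
    (hr : r = b / (1 - (p : ℝ)⁻¹ + b * (p : ℝ) ^ (-(3 : ℝ) / 2)))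
    (hs : s₀ = -(3 / 2) + Real.log r / Real.log p) :
    1 - a * (p : ℝ) ^ (-s₀) / ((p : ℝ) ^ 2 - C) = 0 ∧
    -(3 / 2) < s₀ ∧ s₀ < -(3 / 2) + Real.log 3 / Real.log p :=
  local_zero_near_boundary_general p hp5 a ha1 ha2 C b r s₀ hC hb hr hs
end

section
/- Let P be an infinite set of primes and for each p ∈ P let r_p be a real number with 1 < r_p ≤ 3. Then every point of the vertical line {s ∈ ℂ : Re(s) = -3/2} is a limit point of the set {-3/2 + log(r_p)/log(p) + 2πi·n/log(p) : p ∈ P, n ∈ ℤ}; i.e., for every real a and every ε > 0 there exist p ∈ P and n ∈ ℤ with |(-3/2 + log(r_p)/log(p) + 2πi·n/log(p)) - (-3/2 + ai)| < ε. Hence the local zeros of the Euler factors of the global Igusa zeta function accumulate at every point of the candidate natural boundary Re(s) = -3/2. -/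
/-- Accumulation of local zeros on the candidate natural boundary: if `P` is an infinite
set of primes and `1 < r_p ≤ 3` for `p ∈ P`, then every point `-3/2 + ai` of the line
`Re s = -3/2` is a limit point of the points
`-3/2 + log(r_p)/log p + 2πin/log p` (`p ∈ P`, `n ∈ ℤ`). -/
theorem local_zeros_accumulate_on_boundary
    (P : Set ℕ) (hPinf : P.Infinite) (hPprime : ∀ p ∈ P, p.Prime)
    (r : ℕ → ℝ) (hr : ∀ p ∈ P, 1 < r p ∧ r p ≤ 3)
    (a : ℝ) (ε : ℝ) (hε : 0 < ε) :
    ∃ p ∈ P, ∃ n : ℤ,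
      ‖(((-(3 / 2) + Real.log (r p) / Real.log p : ℝ) : ℂ)
          + ((2 * Real.pi * (n : ℝ) / Real.log p : ℝ) : ℂ) * Complex.I)
        - (((-(3 / 2) : ℝ) : ℂ) + (a : ℂ) * Complex.I)‖ < ε := by
  set M : ℝ := max (4 / ε) (2 * Real.pi / ε) with hM
  obtain ⟨p, hpP, hpgt⟩ := hPinf.exists_gt ⌈Real.exp M⌉₊
  have hMpos : 0 < M := lt_max_of_lt_left (by positivity)
  have hexp : Real.exp M < (p : ℝ) := by
    calc Real.exp M ≤ (⌈Real.exp M⌉₊ : ℝ) := Nat.le_ceil _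
    _ < p := by exact_mod_cast hpgt
  have hppos : (0 : ℝ) < p := lt_trans (Real.exp_pos M) hexp
  have hlogp : M < Real.log p := (Real.lt_log_iff_exp_lt hppos).2 hexp
  have hlogppos : 0 < Real.log p := lt_trans hMpos hlogp
  refine ⟨p, hpP, round (a * Real.log p / (2 * Real.pi)), ?_⟩
  set n : ℤ := round (a * Real.log p / (2 * Real.pi))
  have hπ := Real.pi_pos
  -- simplify the complex expression
  have hz : (((-(3 / 2) + Real.log (r p) / Real.log p : ℝ) : ℂ)
          + ((2 * Real.pi * (n : ℝ) / Real.log p : ℝ) : ℂ) * Complex.I)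
        - (((-(3 / 2) : ℝ) : ℂ) + (a : ℂ) * Complex.I)
      = ((Real.log (r p) / Real.log p : ℝ) : ℂ)
        + ((2 * Real.pi * (n : ℝ) / Real.log p - a : ℝ) : ℂ) * Complex.I := by
    push_cast
    ring
  rw [hz]
  have hre : |Real.log (r p) / Real.log p| < ε / 2 := by
    have hr1 := (hr p hpP).1
    have hle : Real.log (r p) ≤ 2 := by
      have := Real.log_le_sub_one_of_pos (lt_trans one_pos hr1)
      linarith [(hr p hpP).2]
    have hpos : 0 < Real.log (r p) := Real.log_pos hr1
    rw [abs_of_pos (by positivity)]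
    have h4 : 4 / ε < Real.log p := lt_of_le_of_lt (le_max_left _ _) hlogp
    calc Real.log (r p) / Real.log p ≤ 2 / Real.log p := by
          gcongr
      _ < ε / 2 := by
          rw [div_lt_div_iff₀ hlogppos (by norm_num)]
          have : 4 < ε * Real.log p := by
            have := (div_lt_iff₀ hε).1 h4
            linarith [mul_comm (Real.log p) ε]
          linarith
  have him : |2 * Real.pi * (n : ℝ) / Real.log p - a| < ε / 2 := by
    have hround : |(n : ℝ) - a * Real.log p / (2 * Real.pi)| ≤ 1 / 2 := by
      rw [abs_sub_comm]; exact abs_sub_round _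
    have key : 2 * Real.pi * (n : ℝ) / Real.log p - a
        = (2 * Real.pi / Real.log p) * ((n : ℝ) - a * Real.log p / (2 * Real.pi)) := by
      field_simp
    rw [key, abs_mul, abs_of_pos (by positivity)]
    have h2π : 2 * Real.pi / ε < Real.log p := lt_of_le_of_lt (le_max_right _ _) hlogp
    calc 2 * Real.pi / Real.log p * |(n : ℝ) - a * Real.log p / (2 * Real.pi)|
        ≤ 2 * Real.pi / Real.log p * (1 / 2) := by
          apply mul_le_mul_of_nonneg_left hround (by positivity)
      _ = Real.pi / Real.log p := by ring
      _ < ε / 2 := by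
          rw [div_lt_div_iff₀ hlogppos (by norm_num)]
          have : 2 * Real.pi < ε * Real.log p := by
            have := (div_lt_iff₀ hε).1 h2π
            linarith [mul_comm (Real.log p) ε]
          linarith
  calc ‖((Real.log (r p) / Real.log p : ℝ) : ℂ)
        + ((2 * Real.pi * (n : ℝ) / Real.log p - a : ℝ) : ℂ) * Complex.I‖
      ≤ ‖((Real.log (r p) / Real.log p : ℝ) : ℂ)‖
        + ‖((2 * Real.pi * (n : ℝ) / Real.log p - a : ℝ) : ℂ) * Complex.I‖ :=
        norm_add_le _ _
    _ = |Real.log (r p) / Real.log p| + |2 * Real.pi * (n : ℝ) / Real.log p - a| := by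
        rw [norm_mul, Complex.norm_I, mul_one, Complex.norm_real, Complex.norm_real,
          Real.norm_eq_abs, Real.norm_eq_abs]
    _ < ε / 2 + ε / 2 := add_lt_add hre him
    _ = ε := by ring
end
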